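/- arXiv:2410.08423 — 3 statements merged into one kernel-verified Lean document; each statement's English description precedes it below -/
import Mathlib

section
/- Suppose c = c_⋆, where c_⋆ = -1 - x_⋆ - e^{x_⋆} and x_⋆ is the unique positive solution of x e^x/(1+e^x) = 1. Let n be a positive integer and let x, x' ∈ Ω_n satisfy |x − x'| < 3/(2n). Then ‖K_{c,n}²(x,·) − K_{c,n}²(x',·)‖_TV ≤ 1 − e^c. -/
open Real MeasureTheory

noncomputable def sigmoid (x : ℝ) : ℝ := Real.exp x / (1 + Real.exp x)

noncomputable def mc (c x : ℝ) : ℝ := _root_.sigmoid (c * x)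

noncomputable def Ker (c : ℝ) (n : ℕ) (i j : Fin (n + 1)) : ℝ :=
  (n.choose (j : ℕ)) * _root_.sigmoid (c * (i : ℕ) / n) ^ (j : ℕ) *
    (1 - _root_.sigmoid (c * (i : ℕ) / n)) ^ (n - (j : ℕ))

noncomputable def KerPow (c : ℝ) (n : ℕ) : ℕ → Fin (n + 1) → Fin (n + 1) → ℝ
  | 0 => fun i j => if i = j then 1 else 0
  | t + 1 => fun i j => ∑ k, KerPow c n t i k * Ker c n k j

noncomputable def piWeight (c : ℝ) (n : ℕ) (j : Fin (n + 1)) : ℝ :=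
  (n.choose (j : ℕ)) * (1 + Real.exp (c * (j : ℕ) / n)) ^ n

noncomputable def piDist (c : ℝ) (n : ℕ) (j : Fin (n + 1)) : ℝ :=
  piWeight c n j / ∑ k, piWeight c n k

noncomputable def tvDist {m : ℕ} (p q : Fin m → ℝ) : ℝ :=
  ⨆ A : Finset (Fin m), |∑ i ∈ A, p i - ∑ i ∈ A, q i|

/- ### Auxiliary lemmas -/

lemma sigmoid_pos' (x : ℝ) : 0 < _root_.sigmoid x :=
  div_pos (exp_pos x) (by positivity)

lemma sigmoid_lt_one' (x : ℝ) : _root_.sigmoid x < 1 := by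
  rw [_root_.sigmoid, div_lt_one (by positivity)]; linarith [exp_pos x]

lemma sigmoid_le_half' {x : ℝ} (hx : x ≤ 0) : _root_.sigmoid x ≤ 1/2 := by
  rw [_root_.sigmoid, div_le_iff₀ (by positivity)]
  have h := Real.exp_le_one_iff.mpr hx
  nlinarith

lemma sigmoid_hasDeriv' (x : ℝ) :
    HasDerivAt _root_.sigmoid (Real.exp x / (1 + Real.exp x)^2) x := by
  have h1 : HasDerivAt Real.exp (Real.exp x) x := Real.hasDerivAt_exp x
  have h2 : HasDerivAt (fun y => 1 + Real.exp y) (Real.exp x) x :=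
    h1.const_add 1
  have h3 := h1.div h2 (by positivity)
  refine h3.congr_deriv ?_
  have : (1 : ℝ) + Real.exp x ≠ 0 := by positivity
  ring

lemma sigmoid_lipschitz' (a b : ℝ) : |_root_.sigmoid a - _root_.sigmoid b| ≤ |a - b| / 4 := by
  have key : ∀ y ∈ (Set.univ : Set ℝ), ‖Real.exp y / (1 + Real.exp y)^2‖ ≤ 1/4 := by
    intro y _
    rw [Real.norm_eq_abs, abs_of_pos (by positivity)]
    rw [div_le_iff₀ (by positivity)]
    nlinarith [sq_nonneg (1 - Real.exp y), exp_pos y]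
  have := Convex.norm_image_sub_le_of_norm_hasDerivWithin_le
    (fun y (_ : y ∈ (Set.univ : Set ℝ)) => (sigmoid_hasDeriv' y).hasDerivWithinAt)
    key convex_univ (Set.mem_univ b) (Set.mem_univ a)
  rw [Real.norm_eq_abs, Real.norm_eq_abs] at this
  linarith

lemma binom_sum' (n : ℕ) (a b : ℝ) :
    ∑ j : Fin (n+1), (n.choose (j:ℕ)) * a ^ (j:ℕ) * b ^ (n - (j:ℕ)) = (a + b)^n := by
  rw [add_pow, Fin.sum_univ_eq_sum_range (fun j => ((n.choose j : ℝ)) * a ^ j * b ^ (n - j))]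
  exact Finset.sum_congr rfl fun j _ => by ring

lemma ker_row_sum' (c : ℝ) (n : ℕ) (k : Fin (n+1)) : ∑ j, Ker c n k j = 1 := by
  unfold Ker
  rw [binom_sum']
  simp

lemma ker_nonneg' (c : ℝ) (n : ℕ) (k j : Fin (n+1)) : 0 ≤ Ker c n k j := by
  unfold Ker
  have h2 : _root_.sigmoid (c * (k:ℕ) / n) ≤ 1 := (sigmoid_lt_one' _).le
  have h3 : 0 < _root_.sigmoid (c * (k:ℕ) / n) := sigmoid_pos' _
  exact mul_nonneg (mul_nonneg (by positivity) (pow_nonneg h3.le _))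
    (pow_nonneg (by linarith) _)

lemma kerpow_one' (c : ℝ) (n : ℕ) (i j : Fin (n+1)) : KerPow c n 1 i j = Ker c n i j := by
  show (∑ k, (if i = k then (1:ℝ) else 0) * Ker c n k j) = _
  simp

lemma kerpow_two' (c : ℝ) (n : ℕ) (i j : Fin (n+1)) :
    KerPow c n 2 i j = ∑ k, Ker c n i k * Ker c n k j := by
  show (∑ k, KerPow c n 1 i k * Ker c n k j) = _
  exact Finset.sum_congr rfl fun k _ => by rw [kerpow_one']

lemma kerpow_two_sum' (c : ℝ) (n : ℕ) (i : Fin (n+1)) : ∑ j, KerPow c n 2 i j = 1 := by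
  simp only [kerpow_two']
  rw [Finset.sum_comm]
  have h : ∀ k : Fin (n+1), ∑ j, Ker c n i k * Ker c n k j = Ker c n i k := by
    intro k; rw [← Finset.mul_sum, ker_row_sum', mul_one]
  rw [Finset.sum_congr rfl fun k _ => h k, ker_row_sum']

lemma tv_le' {m : ℕ} (p q r : Fin m → ℝ) (hp : ∑ i, p i = 1) (hq : ∑ i, q i = 1)
    (hrp : ∀ i, r i ≤ p i) (hrq : ∀ i, r i ≤ q i) :
    tvDist p q ≤ 1 - ∑ i, r i := by
  apply ciSup_le
  intro A
  rw [abs_sub_le_iff]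
  have hgen : ∀ (u v : Fin m → ℝ), (∑ i, u i = 1) → (∀ i, r i ≤ u i) → (∀ i, r i ≤ v i) →
      ∑ i ∈ A, u i - ∑ i ∈ A, v i ≤ 1 - ∑ i, r i := by
    intro u v hu hru hrv
    have h1 : ∑ i ∈ A, v i ≥ ∑ i ∈ A, r i := Finset.sum_le_sum fun i _ => hrv i
    have h2 : ∑ i ∈ A, (u i - r i) ≤ ∑ i, (u i - r i) :=
      Finset.sum_le_sum_of_subset_of_nonneg (Finset.subset_univ A)
        (fun i _ _ => sub_nonneg.2 (hru i))
    rw [Finset.sum_sub_distrib] at h2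
    rw [Finset.sum_sub_distrib, hu] at h2
    linarith
  exact ⟨hgen p q hp hrp hrq, hgen q p hq hrq hrp⟩

lemma overlap_bound' (c : ℝ) (hc3 : c < -6 * Real.log 2)
    (hc2 : -c < 3 + Real.exp 1 * Real.exp 1)
    (n : ℕ) (hn : 0 < n) (δ : ℝ) (hδ0 : 0 ≤ δ) (hδh : δ ≤ 1/2)
    (hδt : δ ≤ 3*(-c)/(8*n)) : Real.exp c ≤ (1-δ)^n := by
  have hn0 : (0:ℝ) < n := Nat.cast_pos.mpr hn
  have he1 := Real.exp_one_gt_d9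
  have he2 := Real.exp_one_lt_d9
  have hcneg : c < 0 := by
    have := Real.log_two_gt_d9; nlinarith
  rcases le_or_gt n 6 with h6 | h7
  · have hhalf : Real.exp (-(6 * Real.log 2)) = (1/2:ℝ)^6 := by
      rw [Real.exp_neg, show (6:ℝ) * Real.log 2 = Real.log 2 * (6:ℕ) by push_cast; ring,
        Real.exp_mul, Real.exp_log (by norm_num : (0:ℝ) < 2)]
      norm_num
    calc Real.exp c ≤ Real.exp (-(6 * Real.log 2)) := by
          apply Real.exp_le_exp.mpr; linarith
      _ = (1/2:ℝ)^6 := hhalf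
      _ ≤ (1/2:ℝ)^n := by
          apply pow_le_pow_of_le_one (by norm_num) (by norm_num) h6
      _ ≤ (1-δ)^n := by
          apply pow_le_pow_left₀ (by norm_num) (by linarith)
  · have hn7 : (7:ℝ) ≤ n := by exact_mod_cast h7
    set t : ℝ := 3*(-c)/(8*n) with htdef
    have hcpos : 0 < -c := by linarith
    have ht0 : 0 < t := div_pos (by linarith) (by positivity)
    have ht58 : t ≤ 5/8 := by
      rw [htdef, div_le_iff₀ (by positivity)]
      nlinarith
    have h1t : (0:ℝ) < 1 - t := by linarith
    have hnt : (n:ℝ) * t = 3*(-c)/8 := by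
      rw [htdef]; field_simp
    have step2 : Real.exp (-(t/(1-t))) ≤ 1 - t := by
      have h2 : 1/(1-t) ≤ Real.exp (t/(1-t)) := by
        have := Real.add_one_le_exp (t/(1-t))
        have heq : 1/(1-t) = t/(1-t) + 1 := by field_simp; ring
        linarith
      rw [Real.exp_neg]
      rw [inv_le_comm₀ (Real.exp_pos _) h1t]
      rwa [one_div] at h2
    have step3 : c ≤ -((n:ℝ) * (t/(1-t))) := by
      have h : (n:ℝ)*(t/(1-t)) = (3*(-c)/8)/(1-t) := by
        rw [mul_div_assoc', hnt]
      rw [h, le_neg, div_le_iff₀ h1t]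
      nlinarith [mul_nonneg hcpos.le (by linarith : (0:ℝ) ≤ 5/8 - t)]
    calc Real.exp c ≤ Real.exp (-((n:ℝ) * (t/(1-t)))) := Real.exp_le_exp.mpr step3
      _ = Real.exp (-(t/(1-t))) ^ n := by
          rw [← Real.exp_nat_mul]; ring_nf
      _ ≤ (1-t)^n := pow_le_pow_left₀ (Real.exp_pos _).le step2 n
      _ ≤ (1-δ)^n := pow_le_pow_left₀ (by linarith) (by linarith) n

/-- Close coupling when c = c⋆: two-step kernels from states within 3/(2n) are
at TV distance at most 1 − e^c. -/
theorem close_coupling (xs c : ℝ)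
    (hxs : 0 < xs ∧ xs * Real.exp xs / (1 + Real.exp xs) = 1)
    (hc : c = -1 - xs - Real.exp xs) :
    ∀ n : ℕ, 0 < n → ∀ i i' : Fin (n + 1),
      |((i:ℕ):ℝ)/n - ((i':ℕ):ℝ)/n| < 3 / (2*n) →
      tvDist (KerPow c n 2 i) (KerPow c n 2 i') ≤ 1 - Real.exp c := by
  obtain ⟨hxs0, hxseq⟩ := hxs
  have hEpos := Real.exp_pos xs
  have hE1 : 1 < Real.exp xs := by
    have := Real.exp_lt_exp.mpr hxs0
    simpa using this
  have hEeq : xs * Real.exp xs = 1 + Real.exp xs := by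
    field_simp at hxseq
    linarith
  have hxs1 : 1 < xs := by nlinarith
  have hxs2 : xs < 2 := by nlinarith
  have hElb : Real.exp 1 < Real.exp xs := Real.exp_lt_exp.mpr hxs1
  have hEub : Real.exp xs < Real.exp 2 := Real.exp_lt_exp.mpr hxs2
  have hexp2 : Real.exp 2 = Real.exp 1 * Real.exp 1 := by
    rw [← Real.exp_add]; norm_num
  have he1 := Real.exp_one_gt_d9
  have hl2 := Real.log_two_lt_d9
  have hc2 : -c < 3 + Real.exp 1 * Real.exp 1 := by rw [← hexp2]; subst hc; nlinarith
  have hc3 : c < -6 * Real.log 2 := by nlinarith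
  have hcneg : c < 0 := by nlinarith
  intro n hn i i' hdist
  have hn0 : (0:ℝ) < n := Nat.cast_pos.mpr hn
  set p : ℝ := _root_.sigmoid (c * ((i:ℕ):ℝ) / n) with hpdef
  set q : ℝ := _root_.sigmoid (c * ((i':ℕ):ℝ) / n) with hqdef
  set m : ℝ := min p q with hmdef
  set M : ℝ := max p q with hMdef
  have hargs : ∀ l : Fin (n+1), c * ((l:ℕ):ℝ) / n ≤ 0 := by
    intro l
    apply div_nonpos_of_nonpos_of_nonneg _ hn0.le
    exact mul_nonpos_of_nonpos_of_nonneg hcneg.le (Nat.cast_nonneg _)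
  have hp_pos : 0 < p := sigmoid_pos' _
  have hq_pos : 0 < q := sigmoid_pos' _
  have hp_half : p ≤ 1/2 := sigmoid_le_half' (hargs i)
  have hq_half : q ≤ 1/2 := sigmoid_le_half' (hargs i')
  have hm0 : 0 < m := lt_min hp_pos hq_pos
  have hMhalf : M ≤ 1/2 := max_le hp_half hq_half
  have hmp : m ≤ p := min_le_left _ _
  have hmq : m ≤ q := min_le_right _ _
  have hpM : p ≤ M := le_max_left _ _
  have hqM : q ≤ M := le_max_right _ _
  -- bound on δ = M - m
  have hδ0 : 0 ≤ M - m := by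
    have := min_le_max (a := p) (b := q); linarith
  have hδh : M - m ≤ 1/2 := by linarith
  have habs : M - m = |p - q| := by
    rw [hMdef, hmdef, max_sub_min_eq_abs]
    exact abs_sub_comm q p
  have hδt : M - m ≤ 3*(-c)/(8*n) := by
    rw [habs]
    calc |p - q| ≤ |c * ((i:ℕ):ℝ) / n - c * ((i':ℕ):ℝ) / n| / 4 := sigmoid_lipschitz' _ _
      _ = (-c) * |((i:ℕ):ℝ)/n - ((i':ℕ):ℝ)/n| / 4 := by
          rw [show c * ((i:ℕ):ℝ) / n - c * ((i':ℕ):ℝ) / n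
              = c * (((i:ℕ):ℝ)/n - ((i':ℕ):ℝ)/n) by ring, abs_mul,
            abs_of_neg hcneg]
      _ ≤ (-c) * (3/(2*n)) / 4 := by
          apply div_le_div_of_nonneg_right _ (by norm_num)
          exact mul_le_mul_of_nonneg_left hdist.le (by linarith)
      _ = 3*(-c)/(8*n) := by field_simp; ring
  have key : Real.exp c ≤ (1 - (M - m))^n := overlap_bound' c hc3 hc2 n hn _ hδ0 hδh hδt
  -- the common lower-bound distribution
  set r : Fin (n+1) → ℝ := fun k => (n.choose (k:ℕ)) * m ^ (k:ℕ) * (1-M) ^ (n-(k:ℕ)) with hrdef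
  have hbound : ∀ l : Fin (n+1), (m ≤ _root_.sigmoid (c * ((l:ℕ):ℝ) / n)) →
      (_root_.sigmoid (c * ((l:ℕ):ℝ) / n) ≤ M) → ∀ k, r k ≤ Ker c n l k := by
    intro l hml hlM k
    have h1M : (0:ℝ) ≤ 1 - M := by linarith
    have hsp := (sigmoid_pos' (c * ((l:ℕ):ℝ)/n)).le
    have hs1 : m ^ (k:ℕ) ≤ _root_.sigmoid (c * ((l:ℕ):ℝ)/n) ^ (k:ℕ) :=
      pow_le_pow_left₀ hm0.le hml _
    have hs2 : (1-M) ^ (n-(k:ℕ)) ≤ (1 - _root_.sigmoid (c * ((l:ℕ):ℝ)/n)) ^ (n-(k:ℕ)) :=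
      pow_le_pow_left₀ h1M (by linarith) _
    show ((n.choose (k:ℕ)):ℝ) * m ^ (k:ℕ) * (1-M) ^ (n-(k:ℕ)) ≤
      ((n.choose (k:ℕ)):ℝ) * _root_.sigmoid (c * ((l:ℕ):ℝ)/n) ^ (k:ℕ) *
        (1 - _root_.sigmoid (c * ((l:ℕ):ℝ)/n)) ^ (n-(k:ℕ))
    exact mul_le_mul (mul_le_mul_of_nonneg_left hs1 (Nat.cast_nonneg _)) hs2
      (pow_nonneg h1M _) (mul_nonneg (Nat.cast_nonneg _) (pow_nonneg hsp _))
  set R : Fin (n+1) → ℝ := fun j => ∑ k, r k * Ker c n k j with hRdef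
  have hRsum : ∑ j, R j = (1 - (M - m))^n := by
    rw [hRdef]
    rw [Finset.sum_comm]
    have h : ∀ k : Fin (n+1), ∑ j, r k * Ker c n k j = r k := by
      intro k; rw [← Finset.mul_sum, ker_row_sum', mul_one]
    rw [Finset.sum_congr rfl fun k _ => h k, hrdef, binom_sum']
    ring_nf
  have hRle : ∀ (l : Fin (n+1)), (m ≤ _root_.sigmoid (c * ((l:ℕ):ℝ) / n)) →
      (_root_.sigmoid (c * ((l:ℕ):ℝ) / n) ≤ M) → ∀ j, R j ≤ KerPow c n 2 l j := by
    intro l hml hlM j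
    rw [kerpow_two']
    apply Finset.sum_le_sum
    intro k _
    exact mul_le_mul_of_nonneg_right (hbound l hml hlM k) (ker_nonneg' c n k j)
  have htv := tv_le' (KerPow c n 2 i) (KerPow c n 2 i') R
    (kerpow_two_sum' c n i) (kerpow_two_sum' c n i')
    (hRle i hmp hpM) (hRle i' hmq hqM)
  rw [hRsum] at htv
  linarith
end

section
/- Suppose c = c_⋆, where c_⋆ = -1 - x_⋆ - e^{x_⋆} and x_⋆ is the unique positive solution of x e^x/(1+e^x) = 1. For a positive integer n and any constant C_n > 0, define ω_n(x) = C_n Γ(n+1) (1+e^{cx})^n / (Γ(nx+1) Γ(n−nx+1)) for x ∈ [0,1]. Then for every integer n > 20 and every x ∈ [0,1], the second derivative of log ω_n at x satisfies d²/dx² log ω_n(x) < 800. -/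
open Real MeasureTheory

/-- The natural continuous extension of the pmf of π_{c,n} to [0,1]. -/
noncomputable def omegaFn (c : ℝ) (n : ℕ) (Cn : ℝ) (x : ℝ) : ℝ :=
  Cn * Real.Gamma (n + 1) * (1 + Real.exp (c * x)) ^ n /
    (Real.Gamma (n * x + 1) * Real.Gamma (n - n * x + 1))

section NLCAux
open Set Filter Topology

noncomputable def L (y : ℝ) : ℝ := Real.log (Real.Gamma y)
noncomputable def psi : ℝ → ℝ := deriv L
noncomputable def psi1 : ℝ → ℝ := deriv psi



lemma contDiffAt_realGamma {y : ℝ} (hy : 0 < y) : ContDiffAt ℝ ⊤ Real.Gamma y := by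
  have hU : IsOpen {s : ℂ | 0 < s.re} := isOpen_lt continuous_const Complex.continuous_re
  have hd : DifferentiableOn ℂ Complex.Gamma {s : ℂ | 0 < s.re} := fun s hs =>
    (Complex.differentiableAt_Gamma s (fun m => by
      intro h
      rw [h] at hs
      simp only [Set.mem_setOf_eq, Complex.neg_re, Complex.natCast_re] at hs
      have : (0:ℝ) ≤ (m:ℝ) := m.cast_nonneg
      linarith)).differentiableWithinAt
  have han : AnalyticAt ℂ Complex.Gamma (y : ℂ) :=
    hd.analyticAt (hU.mem_nhds (by simpa using hy))
  have h1 : ContDiffAt ℂ ⊤ Complex.Gamma (y : ℂ) := han.contDiffAt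
  have h2 : ContDiffAt ℝ ⊤ Complex.Gamma (y : ℂ) := h1.restrict_scalars ℝ
  have h3 : ContDiffAt ℝ ⊤ (fun t : ℝ => (Complex.Gamma (t : ℂ)).re) y :=
    Complex.reCLM.contDiff.contDiffAt.comp y (h2.comp y Complex.ofRealCLM.contDiff.contDiffAt)
  have : (fun t : ℝ => (Complex.Gamma (t : ℂ)).re) = Real.Gamma := by
    funext t; rw [Complex.Gamma_ofReal]; simp
  rwa [this] at h3

lemma contDiffOn_L : ContDiffOn ℝ ⊤ L (Set.Ioi 0) := by
  intro y hy
  have hy' : (0:ℝ) < y := hy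
  have h := ((Real.contDiffAt_log.mpr (Real.Gamma_pos_of_pos hy').ne').comp y
    (contDiffAt_realGamma hy'))
  exact h.contDiffWithinAt

lemma contDiffOn_psi : ContDiffOn ℝ ⊤ psi (Set.Ioi 0) := by
  have := contDiffOn_L.deriv_of_isOpen isOpen_Ioi (m := ⊤) le_top
  exact this

lemma hasDerivAt_L {y : ℝ} (hy : 0 < y) : HasDerivAt L (psi y) y := by
  have := (contDiffOn_L.contDiffAt (Ioi_mem_nhds hy)).differentiableAt (by simp)
  exact this.hasDerivAt

lemma hasDerivAt_psi {y : ℝ} (hy : 0 < y) : HasDerivAt psi (psi1 y) y := by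
  have := (contDiffOn_psi.contDiffAt (Ioi_mem_nhds hy)).differentiableAt (by simp)
  exact this.hasDerivAt




lemma L_add_one {y : ℝ} (hy : 0 < y) : L (y + 1) = L y + Real.log y := by
  unfold L
  rw [Real.Gamma_add_one hy.ne', Real.log_mul hy.ne' (Real.Gamma_pos_of_pos hy).ne', add_comm]

lemma psi_add_one {y : ℝ} (hy : 0 < y) : psi (y + 1) = psi y + 1 / y := by
  have h1 : HasDerivAt (fun z : ℝ => L (z + 1)) (psi (y + 1)) y := by
    simpa [Function.comp_def] using (hasDerivAt_L (by linarith : (0:ℝ) < y + 1)).comp y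
      ((hasDerivAt_id y).add_const 1)
  have h2 : HasDerivAt (fun z : ℝ => L z + Real.log z) (psi y + 1 / y) y := by
    simpa [one_div] using (hasDerivAt_L hy).fun_add (Real.hasDerivAt_log hy.ne')
  have heq : (fun z : ℝ => L (z + 1)) =ᶠ[𝓝 y] (fun z : ℝ => L z + Real.log z) := by
    filter_upwards [eventually_gt_nhds hy] with z hz using L_add_one hz
  exact (h1.congr_of_eventuallyEq heq.symm).unique h2

lemma psi1_add_one {y : ℝ} (hy : 0 < y) : psi1 (y + 1) = psi1 y - 1 / y ^ 2 := by
  have h1 : HasDerivAt (fun z : ℝ => psi (z + 1)) (psi1 (y + 1)) y := by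
    simpa [Function.comp_def] using (hasDerivAt_psi (by linarith : (0:ℝ) < y + 1)).comp y
      ((hasDerivAt_id y).add_const 1)
  have h2 : HasDerivAt (fun z : ℝ => psi z + 1 / z) (psi1 y - 1 / y ^ 2) y := by
    have := (hasDerivAt_psi hy).add ((hasDerivAt_inv hy.ne').congr_deriv rfl)
    simpa [one_div, sub_eq_add_neg] using (hasDerivAt_psi hy).fun_add (hasDerivAt_inv hy.ne')
  have heq : (fun z : ℝ => psi (z + 1)) =ᶠ[𝓝 y] (fun z : ℝ => psi z + 1 / z) := by
    filter_upwards [eventually_gt_nhds hy] with z hz using psi_add_one hz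
  exact (h1.congr_of_eventuallyEq heq.symm).unique h2

lemma psi_mono : MonotoneOn psi (Set.Ioi 0) := by
  have hc : ConvexOn ℝ (Set.Ioi 0) (Real.log ∘ Real.Gamma) := Real.convexOn_log_Gamma
  have : ConvexOn ℝ (Set.Ioi (0:ℝ)) L := hc
  exact this.monotoneOn_deriv (fun y hy => (hasDerivAt_L hy).differentiableAt)

lemma psi1_nonneg {y : ℝ} (hy : 0 < y) : 0 ≤ psi1 y := by
  have hd : HasDerivAt psi (psi1 y) y := hasDerivAt_psi hy
  have ht : Tendsto (slope psi y) (𝓝[>] y) (𝓝 (psi1 y)) :=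
    (hasDerivAt_iff_tendsto_slope.mp hd).mono_left
      (nhdsWithin_mono y (fun z hz => ne_of_gt hz))
  refine ge_of_tendsto ht ?_
  filter_upwards [self_mem_nhdsWithin] with z hz
  have hz' : y < z := hz
  rw [slope_def_field]
  have := psi_mono (Set.mem_Ioi.mpr hy) (Set.mem_Ioi.mpr (hy.trans hz')) hz'.le
  have hpos : 0 < z - y := by linarith
  have hnum : 0 ≤ psi z - psi y := by linarith
  exact div_nonneg hnum hpos.le

lemma psi1_ge_aux (m : ℕ) : ∀ y : ℝ, 0 < y → 1 / y - 1 / (y + m) ≤ psi1 y := by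
  induction m with
  | zero => intro y hy; simpa using psi1_nonneg hy
  | succ m ih =>
    intro y hy
    have h1 := ih (y + 1) (by linarith)
    rw [psi1_add_one hy] at h1
    have harr : (1:ℝ) / (y+1) - 1 / (y + 1 + m) + 1 / y ^ 2 ≥ 1 / y - 1 / (y + (m+1)) := by
      have h2 : (1:ℝ)/y^2 ≥ 1/y - 1/(y+1) := by
        rw [ge_iff_le, div_sub_div _ _ hy.ne' (by positivity : (y+1) ≠ 0)]
        rw [div_le_div_iff₀ (by positivity) (by positivity)]
        ring_nf; nlinarith
      have h3 : (1:ℝ) / (y + 1 + m) = 1 / (y + (m+1)) := by norm_num; ring_nf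
      rw [h3] at *
      linarith
    have : (1:ℝ) / y - 1 / (y + (m+1)) ≤ psi1 (y+1) + 1/y^2 := by
      rw [psi1_add_one hy]; push_cast at harr ⊢; linarith
    rw [psi1_add_one hy] at this; push_cast at this ⊢; linarith

lemma psi1_ge_inv {y : ℝ} (hy : 0 < y) : 1 / y ≤ psi1 y := by
  have hlim : Tendsto (fun m : ℕ => 1 / y - 1 / (y + m)) atTop (𝓝 (1 / y)) := by
    have : Tendsto (fun m : ℕ => 1 / (y + m)) atTop (𝓝 0) := by
      simp only [one_div]
      apply Tendsto.comp tendsto_inv_atTop_zero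
      exact tendsto_atTop_add_const_left _ _ tendsto_natCast_atTop_atTop
    simpa using (tendsto_const_nhds (x := 1/y)).sub this
  exact le_of_tendsto hlim (Filter.Eventually.of_forall fun m => psi1_ge_aux m y hy)


-- context: xs > 1, exp xs * (xs - 1) = 1, K = 1 + xs + exp xs
lemma core_ineq {xs K u : ℝ} (hgt : 1 < xs) (hE : Real.exp xs * (xs - 1) = 1)
    (hK : K = 1 + xs + Real.exp xs) : u * (K - u) ≤ Real.exp u + 2 + Real.exp (-u) := by
  have h1 : Real.exp xs * (1 + (u - xs)) ≤ Real.exp u := by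
    have := Real.add_one_le_exp (u - xs)
    calc Real.exp xs * (1 + (u - xs)) ≤ Real.exp xs * Real.exp (u - xs) := by
          apply mul_le_mul_of_nonneg_left _ (Real.exp_pos xs).le
          linarith
      _ = Real.exp u := by rw [← Real.exp_add]; ring_nf
  have h2 : (xs - 1) * (1 + (xs - u)) ≤ Real.exp (-u) := by
    have hinv : Real.exp (-xs) = xs - 1 := by
      have h := Real.exp_ne_zero xs
      rw [Real.exp_neg]
      exact (eq_inv_of_mul_eq_one_left (by linarith [hE] : (xs - 1) * Real.exp xs = 1)).symm
    have := Real.add_one_le_exp (xs - u)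
    calc (xs - 1) * (1 + (xs - u)) = Real.exp (-xs) * (1 + (xs - u)) := by rw [hinv]
      _ ≤ Real.exp (-xs) * Real.exp (xs - u) := by
          apply mul_le_mul_of_nonneg_left _ (Real.exp_pos _).le
          linarith
      _ = Real.exp (-u) := by rw [← Real.exp_add]; ring_nf
  subst hK
  nlinarith [sq_nonneg (u - xs), hE, h1, h2]

lemma xs_bounds {xs : ℝ} (hgt : 0 < xs) (hE : xs * Real.exp xs / (1 + Real.exp xs) = 1) :
    1.25 ≤ xs ∧ xs ≤ 1.28 ∧ 1 < xs ∧ Real.exp xs * (xs - 1) = 1 := by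
  have hden : (0:ℝ) < 1 + Real.exp xs := by positivity
  have hE' : xs * Real.exp xs = 1 + Real.exp xs := by
    field_simp at hE; linarith
  have hrel : Real.exp xs * (xs - 1) = 1 := by nlinarith
  have hgt1 : 1 < xs := by
    by_contra h
    push_neg at h
    nlinarith [Real.exp_pos xs]
  have e1 := Real.exp_one_lt_d9   -- exp 1 < 2.7182818286
  have e2 := Real.exp_one_gt_d9   -- exp 1 > 2.7182818283
  constructor
  · -- xs ≥ 1.25 : else exp xs < exp 1.25 < 4 and xs-1 < 0.25 so product < 1
    by_contra h
    push_neg at h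
    have hexp : Real.exp xs < Real.exp 1.25 := Real.exp_lt_exp.mpr h
    have h4 : Real.exp 1.25 < 4 := by
      have hp : Real.exp 1.25 ^ (4:ℕ) = Real.exp 5 := by
        rw [← Real.exp_nat_mul]; norm_num
      have h5 : Real.exp 5 = Real.exp 1 ^ (5:ℕ) := by
        rw [← Real.exp_nat_mul]; norm_num
      by_contra hc
      push_neg at hc
      have hb : (4:ℝ)^(4:ℕ) ≤ Real.exp 1.25 ^ (4:ℕ) :=
        pow_le_pow_left₀ (by norm_num) hc 4
      have hb2 : Real.exp 1 ^ (5:ℕ) < 2.7182818286 ^ (5:ℕ) :=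
        pow_lt_pow_left₀ e1 (Real.exp_pos 1).le (by norm_num)
      rw [hp, h5] at hb
      norm_num at hb hb2
      linarith
    nlinarith [Real.exp_pos xs]
  refine ⟨?_, hgt1, hrel⟩
  · -- xs ≤ 1.28 : else exp xs > exp 1.28 ≥ 3.596 and xs - 1 > 0.28, product > 1
    by_contra h
    push_neg at h
    have hexp : Real.exp 1.28 < Real.exp xs := Real.exp_lt_exp.mpr h
    have hlow : (3.59:ℝ) < Real.exp 1.28 := by
      have hsum : ∑ i ∈ Finset.range 5, (0.28:ℝ) ^ i / i.factorial ≤ Real.exp 0.28 :=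
        Real.sum_le_exp_of_nonneg (by norm_num) 5
      have hval : (1.3231:ℝ) ≤ ∑ i ∈ Finset.range 5, (0.28:ℝ) ^ i / i.factorial := by
        norm_num [Finset.sum_range_succ, Nat.factorial]
      have : Real.exp 1.28 = Real.exp 1 * Real.exp 0.28 := by
        rw [← Real.exp_add]; norm_num
      nlinarith
    nlinarith




lemma second_deriv_eq (c : ℝ) (n : ℕ) (hn : 20 < n) (Cn : ℝ) (hCn : 0 < Cn)
    (x : ℝ) (hx0 : 0 ≤ x) (hx1 : x ≤ 1) :
    deriv (deriv (fun y : ℝ => Real.log (omegaFn c n Cn y))) x =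
      (n:ℝ) * c^2 * Real.exp (c*x) / (1 + Real.exp (c*x))^2
        - (n:ℝ)^2 * psi1 ((n:ℝ)*x+1) - (n:ℝ)^2 * psi1 ((n:ℝ) - (n:ℝ)*x+1) := by
  have hN21 : (21:ℝ) ≤ (n:ℝ) := by exact_mod_cast hn
  set N : ℝ := (n : ℝ) with hNdef
  have hNpos : (0:ℝ) < N := by linarith
  set ε : ℝ := 1/(2*N) with hεdef
  have hε : 0 < ε := by positivity
  have hNε : N * ε = 1/2 := by rw [hεdef]; field_simp
  have hVo : IsOpen (Ioo (x-ε) (x+ε)) := isOpen_Ioo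
  have hVmem : Ioo (x-ε) (x+ε) ∈ 𝓝 x := Ioo_mem_nhds (by linarith) (by linarith)
  have hab : ∀ y ∈ Ioo (x-ε) (x+ε), 0 < N*y+1 ∧ 0 < N - N*y + 1 := by
    intro y hy
    obtain ⟨hy1, hy2⟩ := hy
    constructor
    · nlinarith
    · nlinarith
  have hfp : ∀ y ∈ Ioo (x-ε) (x+ε),
      HasDerivAt (fun z : ℝ => Real.log (omegaFn c n Cn z))
        (N*(c*Real.exp (c*y)/(1+Real.exp (c*y))) - N * psi (N*y+1) + N * psi (N - N*y + 1)) y := by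
    intro y hy
    obtain ⟨hay, hby⟩ := hab y hy
    have hexp : HasDerivAt (fun z : ℝ => Real.exp (c*z)) (Real.exp (c*y)*(c*1)) y :=
      ((hasDerivAt_id y).const_mul c).exp
    have hden_ne : (1 + Real.exp (c*y)) ≠ 0 := by positivity
    have hterm1 : HasDerivAt (fun z : ℝ => Real.log (1 + Real.exp (c*z)))
        ((Real.exp (c*y)*(c*1))/(1 + Real.exp (c*y))) y :=
      (hexp.const_add 1).log hden_ne
    have hLa : HasDerivAt (fun z : ℝ => L (N*z+1)) (psi (N*y+1) * (N*1)) y := by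
      simpa [Function.comp_def] using
        (hasDerivAt_L hay).comp y (((hasDerivAt_id y).const_mul N).add_const 1)
    have hLb : HasDerivAt (fun z : ℝ => L (N - N*z + 1)) (psi (N - N*y+1) * (-(N*1))) y := by
      simpa [Function.comp_def] using
        (hasDerivAt_L hby).comp y ((((hasDerivAt_id y).const_mul N).const_sub N).add_const 1)
    have hg : HasDerivAt (fun z : ℝ =>
        Real.log (Cn * Real.Gamma (N+1)) + (n:ℝ) * Real.log (1 + Real.exp (c*z))
          - L (N*z+1) - L (N - N*z + 1))
        (N*(c*Real.exp (c*y)/(1+Real.exp (c*y))) - N * psi (N*y+1) + N * psi (N - N*y + 1)) y := by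
      have := (((hterm1.const_mul (n:ℝ)).const_add (Real.log (Cn * Real.Gamma (N+1)))).fun_sub
        hLa).fun_sub hLb
      refine this.congr_deriv ?_
      push_cast
      ring
    refine hg.congr_of_eventuallyEq ?_
    filter_upwards [hVo.mem_nhds hy] with z hz
    obtain ⟨haz, hbz⟩ := hab z hz
    have hQ : (0:ℝ) < 1 + Real.exp (c*z) := by positivity
    have hGa : 0 < Real.Gamma (N*z+1) := Real.Gamma_pos_of_pos haz
    have hGb : 0 < Real.Gamma (N - N*z+1) := Real.Gamma_pos_of_pos hbz
    have hG1 : 0 < Real.Gamma (N+1) := Real.Gamma_pos_of_pos (by linarith)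
    show Real.log (omegaFn c n Cn z) = _
    unfold omegaFn
    rw [show ((n:ℝ) - (n:ℝ)*z + 1) = N - N*z + 1 from rfl, show ((n:ℝ)*z+1 : ℝ) = N*z+1 from rfl,
      show ((n:ℝ)+1 : ℝ) = N+1 from rfl]
    rw [Real.log_div (by positivity) (by positivity),
      Real.log_mul (mul_pos hCn hG1).ne' (pow_pos hQ n).ne',
      Real.log_mul hGa.ne' hGb.ne', Real.log_pow]
    unfold L
    ring
  have hev : deriv (fun z : ℝ => Real.log (omegaFn c n Cn z)) =ᶠ[𝓝 x]
      (fun y => N*(c*Real.exp (c*y)/(1+Real.exp (c*y))) - N * psi (N*y+1) + N * psi (N - N*y + 1)) := by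
    filter_upwards [hVmem] with y hy using (hfp y hy).deriv
  rw [hev.deriv_eq]
  -- now compute derivative of p at x
  have hax : 0 < N*x+1 := by nlinarith
  have hbx : 0 < N - N*x + 1 := by nlinarith
  have hE : (0:ℝ) < Real.exp (c*x) := Real.exp_pos _
  have hden_ne : (1 + Real.exp (c*x)) ≠ 0 := by positivity
  have hexp : HasDerivAt (fun z : ℝ => c * Real.exp (c*z)) (c*(Real.exp (c*x)*(c*1))) x :=
    (((hasDerivAt_id x).const_mul c).exp).const_mul c
  have hden : HasDerivAt (fun z : ℝ => 1 + Real.exp (c*z)) (Real.exp (c*x)*(c*1)) x :=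
    (((hasDerivAt_id x).const_mul c).exp).const_add 1
  have hq1 : HasDerivAt (fun z : ℝ => N*(c*Real.exp (c*z)/(1+Real.exp (c*z))))
      (N * ((c*(Real.exp (c*x)*(c*1)) * (1+Real.exp (c*x))
        - c*Real.exp (c*x) * (Real.exp (c*x)*(c*1)))/(1+Real.exp (c*x))^2)) x :=
    (hexp.div hden hden_ne).const_mul N
  have hqa : HasDerivAt (fun z : ℝ => N * psi (N*z+1)) (N * (psi1 (N*x+1) * (N*1))) x := by
    refine HasDerivAt.const_mul N ?_
    simpa [Function.comp_def] using
      (hasDerivAt_psi hax).comp x (((hasDerivAt_id x).const_mul N).add_const 1)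
  have hqb : HasDerivAt (fun z : ℝ => N * psi (N - N*z+1)) (N * (psi1 (N - N*x+1) * (-(N*1)))) x := by
    refine HasDerivAt.const_mul N ?_
    simpa [Function.comp_def] using
      (hasDerivAt_psi hbx).comp x ((((hasDerivAt_id x).const_mul N).const_sub N).add_const 1)
  have hp : HasDerivAt (fun y => N*(c*Real.exp (c*y)/(1+Real.exp (c*y)))
      - N * psi (N*y+1) + N * psi (N - N*y + 1))
      (N * ((c*(Real.exp (c*x)*(c*1)) * (1+Real.exp (c*x))
        - c*Real.exp (c*x) * (Real.exp (c*x)*(c*1)))/(1+Real.exp (c*x))^2)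
        - N * (psi1 (N*x+1) * (N*1)) + N * (psi1 (N - N*x+1) * (-(N*1)))) x :=
    (hq1.fun_sub hqa).fun_add hqb
  rw [hp.deriv]
  field_simp
  ring



private lemma aux_core2 (c x E F : ℝ)
    (hm : -(c*x) * (-c - -(c*x)) * E ≤ (F + 2 + E) * E)
    (hEE : F * E = 1) : c^2*x*(1-x)*E ≤ (1+E)^2 := by
  nlinarith [hm, hEE]

private lemma aux_hS (c x E N : ℝ) (hE : 0 < E) (hNpos : 0 < N) (hxx : 0 < x) (hb1 : 0 < 1-x)
    (hcore2 : c^2*x*(1-x)*E ≤ (1+E)^2) :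
    N*c^2*E/(1+E)^2 ≤ N/x + N/(1-x) := by
  have h1E : (0:ℝ) < 1 + E := by positivity
  have hsum : N/x + N/(1-x) = N/(x*(1-x)) := by
    rw [div_add_div _ _ (ne_of_gt hxx) (ne_of_gt hb1),
      div_eq_div_iff (by positivity) (mul_pos hxx hb1).ne']
    ring
  rw [hsum, div_le_div_iff₀ (by positivity) (mul_pos hxx hb1)]
  nlinarith [mul_le_mul_of_nonneg_left hcore2 hNpos.le]

private lemma aux_h2 (N x : ℝ) (hNpos : 0 < N) (hxx : 0 < x) :
    N/x - N^2/(N*x+1) ≤ 1/x^2 := by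
  have hax : (0:ℝ) < N*x+1 := by nlinarith
  have he : N/x - N^2/(N*x+1) = N/(x*(N*x+1)) := by
    rw [div_sub_div _ _ (ne_of_gt hxx) hax.ne',
      div_eq_div_iff (mul_pos hxx hax).ne' (mul_pos hxx hax).ne']
    ring
  rw [he, div_le_div_iff₀ (mul_pos hxx hax) (by positivity)]
  nlinarith

private lemma aux_hS1 (N c E : ℝ) (hE : 0 < E) (hNpos : 0 < N) (hc2 : c^2 ≤ 40) :
    N*c^2*E/(1+E)^2 ≤ N*c^2/4 := by
  have h1E : (0:ℝ) < 1 + E := by positivity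
  have h4 : 4*E ≤ (1+E)^2 := by nlinarith [sq_nonneg (1-E)]
  rw [div_le_div_iff₀ (by positivity) (by norm_num)]
  nlinarith [mul_le_mul_of_nonneg_left h4 (by positivity : (0:ℝ) ≤ N*c^2)]

private lemma aux_hS2r1 (N x c : ℝ) (hN21 : 21 ≤ N) (hx0 : 0 ≤ x) (hreg : x ≤ 1/20)
    (hc2 : c^2 ≤ 40) : N*c^2/4 ≤ N^2/(N*x+1) := by
  have hNpos : (0:ℝ) < N := by linarith
  have hax : (0:ℝ) < N*x+1 := by nlinarith
  rw [div_le_div_iff₀ (by norm_num) hax]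
  have hxa : N*x + 1 ≤ N/20 + 1 := by nlinarith
  have h1 : c^2 * (N*x+1) ≤ 40 * (N/20 + 1) :=
    mul_le_mul hc2 hxa hax.le (by norm_num)
  have h3 : c^2 * (N*x+1) ≤ 4*N := by linarith
  nlinarith [mul_le_mul_of_nonneg_left h3 hNpos.le]

private lemma aux_hS2r3 (N x c E : ℝ) (hN21 : 21 ≤ N) (hx1 : x ≤ 1) (h55 : 11/20 ≤ x)
    (hE : 0 < E) (h20 : E ≤ 1/20) (hc2 : 0 ≤ c^2) (hc2' : c^2 ≤ 40) :
    N*c^2*E ≤ N^2/(N - N*x+1) := by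
  have hNpos : (0:ℝ) < N := by linarith
  have hbx : (0:ℝ) < N - N*x+1 := by nlinarith
  rw [le_div_iff₀ hbx]
  have hcE : c^2 * E ≤ 2 := by
    calc c^2 * E ≤ 40 * (1/20) := mul_le_mul hc2' h20 hE.le (by norm_num)
      _ = 2 := by norm_num
  have hb' : N - N*x + 1 ≤ 0.45*N + 1 := by nlinarith
  have h1 : (c^2*E) * (N - N*x+1) ≤ 2 * (0.45*N+1) :=
    mul_le_mul hcE hb' hbx.le (by norm_num)
  have h2 : 2 * (0.45*N+1) ≤ N := by linarith
  nlinarith [mul_le_mul_of_nonneg_left h1 hNpos.le, mul_le_mul_of_nonneg_left h2 hNpos.le]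

set_option maxHeartbeats 1600000 in
lemma final_bound {xs c : ℝ} (hgt1 : 1 < xs) (hrel : Real.exp xs * (xs - 1) = 1)
    (h125 : 1.25 ≤ xs) (h128 : xs ≤ 1.28) (hc : c = -1 - xs - Real.exp xs)
    {N x : ℝ} (hN21 : 21 ≤ N) (hx0 : 0 ≤ x) (hx1 : x ≤ 1) :
    N * c^2 * Real.exp (c*x) / (1 + Real.exp (c*x))^2
      - N^2 * psi1 (N*x+1) - N^2 * psi1 (N - N*x+1) < 800 := by
  have hNpos : (0:ℝ) < N := by linarith
  have hax : (0:ℝ) < N*x+1 := by nlinarith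
  have hbx : (0:ℝ) < N - N*x+1 := by nlinarith
  have hE : (0:ℝ) < Real.exp (c*x) := Real.exp_pos _
  set E : ℝ := Real.exp (c*x) with hEdef
  clear_value E
  have h1E : (0:ℝ) < 1 + E := by positivity
  -- bounds on exp xs and c
  have hexpu : Real.exp xs ≤ 4 := by nlinarith
  have hexpl : (25:ℝ)/7 ≤ Real.exp xs := by nlinarith [Real.exp_pos xs]
  have hcu : c ≤ -5.82 := by rw [hc]; linarith
  have hcl : (-6.28:ℝ) ≤ c := by rw [hc]; linarith
  have hc2 : c^2 ≤ 40 := by nlinarith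
  -- psi1 lower bounds
  have hA : N^2 / (N*x+1) ≤ N^2 * psi1 (N*x+1) := by
    have := mul_le_mul_of_nonneg_left (psi1_ge_inv hax) (sq_nonneg N)
    calc N^2/(N*x+1) = N^2 * (1/(N*x+1)) := by ring
      _ ≤ N^2 * psi1 (N*x+1) := this
  have hB : N^2 / (N - N*x+1) ≤ N^2 * psi1 (N - N*x+1) := by
    have := mul_le_mul_of_nonneg_left (psi1_ge_inv hbx) (sq_nonneg N)
    calc N^2/(N - N*x+1) = N^2 * (1/(N - N*x+1)) := by ring
      _ ≤ N^2 * psi1 (N - N*x+1) := this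
  have hApos : (0:ℝ) < N^2 / (N*x+1) := by positivity
  have hBpos : (0:ℝ) < N^2 / (N - N*x+1) := by positivity
  rcases le_or_gt x (1/20) with hreg | hreg1
  · -- Region 1
    have hS := aux_hS1 N c E hE hNpos hc2
    have hS2 := aux_hS2r1 N x c hN21 hx0 hreg hc2
    linarith
  · rcases le_or_gt x (11/20) with hreg2 | hreg3
    · -- Region 2 (middle)
      have hxx : (0:ℝ) < x := by linarith
      have hb1 : (0:ℝ) < 1 - x := by linarith
      have hcore := core_ineq hgt1 hrel (K := -c) (by rw [hc]; ring) (u := -(c*x))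
      have hEE : Real.exp (-(c*x)) * Real.exp (c*x) = 1 := by
        rw [← Real.exp_add]; simp
      have hcore2 : c^2*x*(1-x)*E ≤ (1+E)^2 := by
        simp only [neg_neg] at hcore
        rw [← hEdef] at hcore hEE
        exact aux_core2 c x E _ (mul_le_mul_of_nonneg_right hcore hE.le) hEE
      have hS := aux_hS c x E N hE hNpos hxx hb1 hcore2
      have h2 := aux_h2 N x hNpos hxx
      have h3' := aux_h2 N (1-x) hNpos hb1
      have hbeq : N*(1-x)+1 = N - N*x+1 := by ring
      rw [hbeq] at h3'
      have h4 : 1/x^2 ≤ 400 := by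
        rw [div_le_iff₀ (pow_pos hxx 2)]
        nlinarith [sq_nonneg (x - 1/20)]
      have h5 : 1/(1-x)^2 ≤ 5 := by
        rw [div_le_iff₀ (pow_pos hb1 2)]
        nlinarith [sq_nonneg (1 - x - 9/20)]
      linarith
    · -- Region 3
      have hcx : c*x ≤ -3.2 := by
        have h1 : c*x ≤ -5.82*x := mul_le_mul_of_nonneg_right hcu hx0
        nlinarith
      have h20 : E ≤ 1/20 := by
        have h1 : Real.exp (c*x) ≤ Real.exp (-3.2) := Real.exp_le_exp.mpr hcx
        have he3 : (20:ℝ) < Real.exp 3.2 := by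
          have h3 : Real.exp 3 ≤ Real.exp 3.2 := Real.exp_le_exp.mpr (by norm_num)
          have h4 : Real.exp 3 = Real.exp 1 ^ (3:ℕ) := by
            rw [← Real.exp_nat_mul]; norm_num
          have h6 : (20:ℝ) < 2.7182818283^(3:ℕ) := by norm_num
          have h7 : (2.7182818283:ℝ)^(3:ℕ) < Real.exp 1 ^ (3:ℕ) :=
            pow_lt_pow_left₀ Real.exp_one_gt_d9 (by norm_num) (by norm_num)
          rw [h4] at h3
          linarith
        have h2 : Real.exp (-3.2) ≤ 1/20 := by
          rw [Real.exp_neg]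
          rw [inv_le_comm₀ (Real.exp_pos _) (by norm_num)]
          linarith
        rw [hEdef]; linarith
      have hS : N*c^2*E/(1+E)^2 ≤ N*c^2*E := by
        apply div_le_self (by positivity)
        nlinarith [hE]
      have hS2 := aux_hS2r3 N x c E hN21 hx1 hreg3.le hE h20 (sq_nonneg c) hc2
      linarith

end NLCAux

/-- Near log-concavity of ω_n when c = c⋆: the second derivative of log ω_n is below 800. -/
theorem near_log_concavity (xs c : ℝ)
    (hxs : 0 < xs ∧ xs * Real.exp xs / (1 + Real.exp xs) = 1)
    (hc : c = -1 - xs - Real.exp xs) :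
    ∀ n : ℕ, 20 < n → ∀ Cn : ℝ, 0 < Cn → ∀ x ∈ Set.Icc (0:ℝ) 1,
      deriv (deriv (fun y : ℝ => Real.log (omegaFn c n Cn y))) x < 800 := by
  obtain ⟨hxs0, hxs1⟩ := hxs
  obtain ⟨h125, h128, hgt1, hrel⟩ := xs_bounds hxs0 hxs1
  intro n hn Cn hCn x hx
  obtain ⟨hx0, hx1⟩ := hx
  rw [second_deriv_eq c n hn Cn hCn x hx0 hx1]
  have hN21 : (21:ℝ) ≤ (n:ℝ) := by exact_mod_cast hn
  exact final_bound hgt1 hrel h125 h128 hc hN21 hx0 hx1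
end

section
/- Suppose c > c_⋆, where c_⋆ = -1 - x_⋆ - e^{x_⋆} and x_⋆ is the unique positive solution of x e^x/(1+e^x) = 1. Then the derivative of the second iterate m_c² = m_c ∘ m_c satisfies 0 ≤ (m_c²)'(x) < 1 for every x ∈ [0,1]. -/
open Real MeasureTheory

lemma sigmoid_hasDerivAt (x : ℝ) :
    HasDerivAt _root_.sigmoid (Real.exp x / (1 + Real.exp x) ^ 2) x := by
  have h : (1 + Real.exp x) ≠ 0 := by positivity
  have hd := (Real.hasDerivAt_exp x).div ((Real.hasDerivAt_exp x).const_add 1) h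
  have : _root_.sigmoid = fun y => Real.exp y / (1 + Real.exp y) := rfl
  rw [this]
  refine hd.congr_deriv ?_
  field_simp
  ring

lemma mc_hasDerivAt (c z : ℝ) :
    HasDerivAt (fun y : ℝ => mc c y)
      (c * (Real.exp (c * z) / (1 + Real.exp (c * z)) ^ 2)) z := by
  have hlin : HasDerivAt (fun y : ℝ => c * y) c z := by
    simpa using (hasDerivAt_id z).const_mul c
  have := (sigmoid_hasDerivAt (c * z)).comp z hlin
  exact this.congr_deriv (mul_comm _ _)

lemma mc2_hasDerivAt (c x : ℝ) :
    HasDerivAt (fun y : ℝ => mc c (mc c y))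
      (c ^ 2 * (Real.exp (c * x) / (1 + Real.exp (c * x)) ^ 2) *
        (Real.exp (c * _root_.sigmoid (c * x)) / (1 + Real.exp (c * _root_.sigmoid (c * x))) ^ 2)) x := by
  have h1 := mc_hasDerivAt c x
  have h2 := mc_hasDerivAt c (mc c x)
  have := h2.comp x h1
  have hmc : mc c x = _root_.sigmoid (c * x) := rfl
  refine this.congr_deriv ?_
  rw [hmc]
  ring

/-- Key inequality: with `E = exp xs` and `E * (xs - 1) = 1` (the defining equation of `x⋆`),
for every real `w` we have `w (1 + xs + E - w) e^w ≤ (1 + e^w)^2`. -/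
lemma key_ineq (xs w : ℝ) (hxs0 : 0 < xs) (hE : Real.exp xs * (xs - 1) = 1) :
    w * (1 + xs + Real.exp xs - w) * Real.exp w ≤ (1 + Real.exp w) ^ 2 := by
  have hEp := Real.exp_pos xs
  have hxs1 : 1 < xs := by nlinarith
  have hnx : Real.exp (-xs) = xs - 1 := by
    rw [Real.exp_neg]
    field_simp
    nlinarith
  have h1 : Real.exp xs * (1 + (w - xs)) ≤ Real.exp w := by
    have ht := Real.add_one_le_exp (w - xs)
    calc Real.exp xs * (1 + (w - xs)) ≤ Real.exp xs * Real.exp (w - xs) := by nlinarith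
      _ = Real.exp w := by rw [← Real.exp_add]; ring_nf
  have h3 : (xs - 1) * (1 + (xs - w)) ≤ Real.exp (-w) := by
    have ht := Real.add_one_le_exp (xs - w)
    calc (xs - 1) * (1 + (xs - w)) = Real.exp (-xs) * (1 + (xs - w)) := by rw [hnx]
      _ ≤ Real.exp (-xs) * Real.exp (xs - w) := by nlinarith [Real.exp_pos (-xs)]
      _ = Real.exp (-w) := by rw [← Real.exp_add]; ring_nf
  have hF : 0 ≤ Real.exp w + Real.exp (-w) + 2 + w ^ 2 - (1 + xs + Real.exp xs) * w := by
    nlinarith [sq_nonneg (w - xs)]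
  have hprod : Real.exp w * Real.exp (-w) = 1 := by rw [← Real.exp_add]; simp
  nlinarith [mul_nonneg (Real.exp_pos w).le hF, hprod]

set_option maxHeartbeats 1000000 in
/-- If c > c⋆, the derivative of the second iterate m_c² satisfies 0 ≤ (m_c²)'(x) < 1 on [0,1]. -/
theorem second_iterate_derivative (xs c : ℝ)
    (hxs : 0 < xs ∧ xs * Real.exp xs / (1 + Real.exp xs) = 1)
    (hc : c > -1 - xs - Real.exp xs) :
    ∀ x ∈ Set.Icc (0:ℝ) 1,
      0 ≤ deriv (fun y : ℝ => mc c (mc c y)) x ∧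
      deriv (fun y : ℝ => mc c (mc c y)) x < 1 := by
  obtain ⟨hxs0, hxseq⟩ := hxs
  have hEp := Real.exp_pos xs
  have hexs : Real.exp xs * (xs - 1) = 1 := by
    have hden : (1 : ℝ) + Real.exp xs > 0 := by positivity
    field_simp at hxseq
    nlinarith
  intro x hx
  obtain ⟨hx0, hx1⟩ := hx
  set u := c * x with hu
  set s := c * _root_.sigmoid u with hs
  have hDeriv : deriv (fun y : ℝ => mc c (mc c y)) x =
      c ^ 2 * (Real.exp u / (1 + Real.exp u) ^ 2) *
        (Real.exp s / (1 + Real.exp s) ^ 2) := (mc2_hasDerivAt c x).deriv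
  rw [hDeriv]
  have hup := Real.exp_pos u
  have hsp := Real.exp_pos s
  refine ⟨by positivity, ?_⟩
  rcases le_or_gt 0 c with hc0 | hc0
  · -- c ≥ 0 : bound by c²/4 · e^{-c/2} ≤ 4/e² < 1
    have hu0 : 0 ≤ u := mul_nonneg hc0 hx0
    have hA : Real.exp u / (1 + Real.exp u) ^ 2 ≤ 1 / 4 := by
      rw [div_le_iff₀ (by positivity)]
      nlinarith [sq_nonneg (1 - Real.exp u)]
    have hsig : 1 / 2 ≤ _root_.sigmoid u := by
      have h1 : (1 : ℝ) ≤ Real.exp u := Real.one_le_exp hu0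
      rw [_root_.sigmoid, le_div_iff₀ (by positivity)]
      linarith
    have hs2 : c / 2 ≤ s := by
      have := mul_le_mul_of_nonneg_left hsig hc0
      rw [hs]; linarith
    have hB : Real.exp s / (1 + Real.exp s) ^ 2 ≤ Real.exp (-s) := by
      have hkey : Real.exp (-s) * (1 + Real.exp s) ^ 2
          = Real.exp (-s) + 2 + Real.exp s := by
        rw [Real.exp_neg]; field_simp; ring
      rw [div_le_iff₀ (by positivity), hkey]
      linarith [Real.exp_pos (-s)]
    have hB2 : Real.exp (-s) ≤ Real.exp (-(c / 2)) := Real.exp_le_exp.mpr (by linarith)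
    have hB3 : Real.exp s / (1 + Real.exp s) ^ 2 ≤ Real.exp (-(c / 2)) := hB.trans hB2
    have hstep : c ^ 2 * (Real.exp u / (1 + Real.exp u) ^ 2) *
        (Real.exp s / (1 + Real.exp s) ^ 2) ≤ c ^ 2 * (1 / 4) * Real.exp (-(c / 2)) := by
      gcongr
    refine lt_of_le_of_lt hstep ?_
    -- c² / 4 · e^{-c/2} ≤ 4 e^{-2} < 1
    have ht := Real.add_one_le_exp (c / 4 - 1)
    have hq := Real.exp_pos (c / 4 - 1)
    have hcc : c ^ 2 ≤ 16 * Real.exp (c / 4 - 1) ^ 2 := by nlinarith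
    have hsq : Real.exp (c / 4 - 1) ^ 2 = Real.exp (c / 2 - 2) := by
      rw [sq, ← Real.exp_add]; ring_nf
    have he2 : Real.exp (c / 2 - 2) * Real.exp (-(c / 2)) = Real.exp (-2) := by
      rw [← Real.exp_add]; ring_nf
    have h1e : (2 : ℝ) < Real.exp 1 := by
      have := Real.exp_one_gt_d9; linarith
    have hlt : Real.exp (-2 : ℝ) < 1 / 4 := by
      have h2e : (4 : ℝ) < Real.exp 2 := by
        have : Real.exp 2 = Real.exp 1 * Real.exp 1 := by rw [← Real.exp_add]; norm_num
        nlinarith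
      rw [Real.exp_neg]
      rw [inv_lt_iff_one_lt_mul₀ (by positivity)]  -- may need fixing
      nlinarith
    have hpos2 := Real.exp_pos (-(c / 2))
    have hcc2 : c ^ 2 ≤ 16 * Real.exp (c / 2 - 2) := by rw [← hsq]; exact hcc
    have hstep2 : c ^ 2 * (1 / 4) * Real.exp (-(c / 2)) ≤ 4 * Real.exp (-2) := by
      calc c ^ 2 * (1 / 4) * Real.exp (-(c / 2))
          ≤ 16 * Real.exp (c / 2 - 2) * (1 / 4) * Real.exp (-(c / 2)) := by
            exact mul_le_mul_of_nonneg_right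
              (mul_le_mul_of_nonneg_right hcc2 (by norm_num)) hpos2.le
        _ = 4 * (Real.exp (c / 2 - 2) * Real.exp (-(c / 2))) := by ring
        _ = 4 * Real.exp (-2) := by rw [he2]
    linarith
  · -- c < 0 : sharp case
    have ht0 : 0 < Real.exp u / (1 + Real.exp u) := by positivity
    have ht1 : Real.exp u / (1 + Real.exp u) < 1 := by
      rw [div_lt_one (by positivity)]; linarith
    set t := Real.exp u / (1 + Real.exp u) with hts
    set w := -c * t with hws
    have hw0 : 0 < w := mul_pos (by linarith) ht0
    have hsw : s = -w := by
      rw [hs, hws, _root_.sigmoid]; ring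
    -- rewrite second factor in terms of w
    have hBw : Real.exp s / (1 + Real.exp s) ^ 2 = Real.exp w / (1 + Real.exp w) ^ 2 := by
      rw [hsw, Real.exp_neg]
      have hwp := Real.exp_pos w
      field_simp
      ring
    -- rewrite first factor: c² σ'(u) = w(-c - w)
    have hAw : c ^ 2 * (Real.exp u / (1 + Real.exp u) ^ 2) = w * (-c - w) := by
      have h1u : (0:ℝ) < 1 + Real.exp u := by positivity
      rw [hws, hts]
      field_simp
      ring
    rw [hBw, hAw]
    have hσp : 0 < Real.exp w / (1 + Real.exp w) ^ 2 := by positivity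
    have hbb : -c < 1 + xs + Real.exp xs := by linarith
    have hkey := key_ineq xs w hxs0 hexs
    have hle1 : w * (1 + xs + Real.exp xs - w) * (Real.exp w / (1 + Real.exp w) ^ 2) ≤ 1 := by
      rw [mul_div_assoc'  , div_le_one (by positivity)]
      calc w * (1 + xs + Real.exp xs - w) * Real.exp w ≤ (1 + Real.exp w) ^ 2 := hkey
        _ = (1 + Real.exp w) ^ 2 := rfl
    have hstrict : w * (-c - w) < w * (1 + xs + Real.exp xs - w) := by nlinarith
    calc w * (-c - w) * (Real.exp w / (1 + Real.exp w) ^ 2)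
        < w * (1 + xs + Real.exp xs - w) * (Real.exp w / (1 + Real.exp w) ^ 2) :=
          mul_lt_mul_of_pos_right hstrict hσp
      _ ≤ 1 := hle1
end
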